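/- Let G be a graph and H = G[V(G) - N[core(G)]]. A set S_H is a maximum stable set of H if and only if there exists a maximum stable set S_G of G with S_H = S_G ∩ V(H). -/

import Mathlib

/-! Every maximum stable set of `G` contains `core G` and therefore misses its neighbourhood, so
it is the disjoint union of `core G` and its trace on `H`. Conversely `core G` is stable and has
no edges to `H`, so adding it to a stable set of `H` gives a stable set of `G`. Hence
`α(H) + |core G| = α(G)`, and the trace map is a bijection between maximum stable sets.
The argument works verbatim for any `A ⊆ core G` in place of `core G`. -/

open Finset

variable {V : Type*} [Fintype V] [DecidableEq V]

def stable (G : SimpleGraph V) (S : Finset V) : Prop :=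
  ∀ a ∈ S, ∀ b ∈ S, ¬ G.Adj a b

/-  The open neighbourhood `N(A)`; the closed one is `A ∪ nbhd G A`. -/
open Classical in
noncomputable def nbhd (G : SimpleGraph V) (A : Finset V) : Finset V :=
  Finset.univ.filter fun v => ∃ a ∈ A, G.Adj a v

open Classical in
noncomputable def alpha (G : SimpleGraph V) : ℕ :=
  Finset.univ.sup fun S : Finset V => if stable G S then S.card else 0

def maxStable (G : SimpleGraph V) (S : Finset V) : Prop :=
  stable G S ∧ S.card = alpha G

/-  `core(G)`: the intersection of all maximum stable sets. -/
open Classical in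
noncomputable def core (G : SimpleGraph V) : Finset V :=
  Finset.univ.filter fun v => ∀ S : Finset V, maxStable G S → v ∈ S

def isolated (G : SimpleGraph V) (v : V) : Prop := ∀ w, ¬ G.Adj v w

open Classical in
noncomputable def isol (G : SimpleGraph V) : Finset V :=
  Finset.univ.filter fun v => isolated G v

variable {G : SimpleGraph V} {S T A : Finset V}

omit [Fintype V] [DecidableEq V] in
theorem stable.mono (hS : stable G S) (hTS : T ⊆ S) : stable G T :=
  fun a ha b hb => hS a (hTS ha) b (hTS hb)

omit [DecidableEq V] in
theorem stable.card_le_alpha (hS : stable G S) : S.card ≤ alpha G := by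
  classical
  simpa [alpha, hS] using
    le_sup (f := fun S : Finset V => if stable G S then S.card else 0) (mem_univ S)

omit [DecidableEq V] in
theorem exists_maxStable (G : SimpleGraph V) : ∃ S, maxStable G S := by
  classical
  obtain ⟨S, -, hS⟩ := exists_mem_eq_sup (univ : Finset (Finset V)) univ_nonempty
    (fun S => if stable G S then S.card else 0)
  by_cases h : stable G S
  · exact ⟨S, h, by rw [alpha, hS, if_pos h]⟩
  · exact ⟨∅, fun a ha => absurd ha (notMem_empty a), by rw [alpha, hS, if_neg h, card_empty]⟩

theorem maxStable.core_subset (hS : maxStable G S) : core G ⊆ S := fun v hv => by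
  classical
  exact (mem_filter.1 hv).2 S hS

theorem stable_of_subset_core (hA : A ⊆ core G) : stable G A := by
  obtain ⟨S, hS⟩ := exists_maxStable G
  exact hS.1.mono (hA.trans hS.core_subset)

omit [DecidableEq V] in
theorem stable.notMem_nbhd (hS : stable G S) (hAS : A ⊆ S) {v : V} (hv : v ∈ S) :
    v ∉ nbhd G A := by
  classical
  intro hvA
  obtain ⟨-, a, ha, hav⟩ := mem_filter.1 hvA
  exact hS a (hAS ha) v hv hav

section InducedSubgraph

variable {p : V → Prop}

omit [Fintype V] [DecidableEq V] in
theorem stable_comap_val_iff {T : Finset (Subtype p)} :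
    stable (G.comap Subtype.val) T ↔ stable G (T.map (Function.Embedding.subtype p)) := by
  simp only [stable, mem_map, Function.Embedding.coe_subtype, forall_exists_index, and_imp,
    forall_apply_eq_imp_iff₂, SimpleGraph.comap_adj]

omit [Fintype V] [DecidableEq V] in
theorem stable.subtype [DecidablePred p] (hS : stable G S) :
    stable (G.comap Subtype.val) (S.subtype p) := by
  rw [stable_comap_val_iff, subtype_map]
  exact hS.mono (filter_subset p S)

end InducedSubgraph

section DeleteClosedNbhd

theorem disjoint_map_subtype_outside_closedNbhd
    (T : Finset {x : V // x ∉ A ∪ nbhd G A}) :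
    Disjoint A (T.map (Function.Embedding.subtype _)) := by
  refine disjoint_left.2 fun v hvA hvT => ?_
  obtain ⟨w, -, rfl⟩ := mem_map.1 hvT
  exact w.2 (mem_union_left _ hvA)

theorem stable.union_of_subset_core (hA : A ⊆ core G)
    {T : Finset {x : V // x ∉ A ∪ nbhd G A}} (hT : stable (G.comap Subtype.val) T) :
    stable G (A ∪ T.map (Function.Embedding.subtype _)) := by
  classical
  have hT' := stable_comap_val_iff.1 hT
  have hcross : ∀ a ∈ A, ∀ b ∈ T.map (Function.Embedding.subtype _), ¬ G.Adj a b := by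
    rintro a ha _ hb hab
    obtain ⟨w, -, rfl⟩ := mem_map.1 hb
    exact w.2 (mem_union_right _ (mem_filter.2 ⟨mem_univ _, a, ha, hab⟩))
  intro a ha b hb
  rcases mem_union.1 ha with ha | ha <;> rcases mem_union.1 hb with hb | hb
  · exact stable_of_subset_core hA a ha b hb
  · exact hcross a ha b hb
  · exact fun hab => hcross b hb a ha hab.symm
  · exact hT' a ha b hb

theorem maxStable.filter_outside_closedNbhd (hS : maxStable G S) (hA : A ⊆ core G) :
    S.filter (fun x => x ∉ A ∪ nbhd G A) = S \ A := by
  have hAS := hA.trans hS.core_subset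
  ext v
  simp only [mem_filter, mem_sdiff, mem_union, not_or]
  exact ⟨fun ⟨hv, hvA, _⟩ => ⟨hv, hvA⟩, fun ⟨hv, hvA⟩ => ⟨hv, hvA, hS.1.notMem_nbhd hAS hv⟩⟩

theorem maxStable.card_subtype_outside_closedNbhd (hS : maxStable G S) (hA : A ⊆ core G) :
    (S.subtype (fun x => x ∉ A ∪ nbhd G A)).card + A.card = alpha G := by
  have hAS := hA.trans hS.core_subset
  rw [card_subtype, hS.filter_outside_closedNbhd hA, card_sdiff_of_subset hAS, ← hS.2,
    Nat.sub_add_cancel (card_le_card hAS)]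

theorem alpha_comap_outside_closedNbhd_add_card (hA : A ⊆ core G) :
    alpha (G.comap (Subtype.val : {x : V // x ∉ A ∪ nbhd G A} → V)) + A.card = alpha G := by
  apply le_antisymm
  · obtain ⟨T, hT⟩ := exists_maxStable (G.comap (Subtype.val : {x // x ∉ A ∪ nbhd G A} → V))
    have h := (hT.1.union_of_subset_core hA).card_le_alpha
    rwa [card_union_of_disjoint (disjoint_map_subtype_outside_closedNbhd T), card_map, hT.2,
      add_comm] at h
  · obtain ⟨S, hS⟩ := exists_maxStable G
    rw [← hS.card_subtype_outside_closedNbhd hA]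
    exact Nat.add_le_add_right hS.1.subtype.card_le_alpha _

theorem maxStable_comap_outside_closedNbhd_iff (hA : A ⊆ core G)
    (T : Finset {x : V // x ∉ A ∪ nbhd G A}) :
    maxStable (G.comap Subtype.val) T ↔
      ∃ S, maxStable G S ∧ T = S.subtype (fun x => x ∉ A ∪ nbhd G A) := by
  have hα := alpha_comap_outside_closedNbhd_add_card hA
  constructor
  · intro hT
    refine ⟨A ∪ T.map (Function.Embedding.subtype _), ⟨hT.1.union_of_subset_core hA, ?_⟩, ?_⟩
    · rw [card_union_of_disjoint (disjoint_map_subtype_outside_closedNbhd T), card_map, hT.2,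
        ← hα, add_comm]
    · ext w
      simp only [mem_subtype, mem_union, mem_map, Function.Embedding.coe_subtype, Subtype.val_inj,
        exists_eq_right]
      exact (or_iff_right fun hwA => w.2 (mem_union_left _ hwA)).symm
  · rintro ⟨S, hS, rfl⟩
    refine ⟨hS.1.subtype, ?_⟩
    have := hS.card_subtype_outside_closedNbhd hA
    omega

end DeleteClosedNbhd

theorem stmt12 (G : SimpleGraph V)
    (S_H : Finset {x : V // x ∉ core G ∪ nbhd G (core G)}) :
    maxStable (SimpleGraph.comap
        (Subtype.val : {x : V // x ∉ core G ∪ nbhd G (core G)} → V) G) S_H ↔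
      ∃ S_G : Finset V, maxStable G S_G ∧
        S_H = S_G.subtype (fun x => x ∉ core G ∪ nbhd G (core G)) :=
  maxStable_comap_outside_closedNbhd_iff subset_rfl S_H
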